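/- arXiv:2107.08155 — 2 statements merged into one kernel-verified Lean document; each statement's English description precedes it below -/
import Mathlib

section
/- Let R be a DVR with uniformizer π, n ≥ 0, and ℰ an R-flat coherent sheaf on X_R. There is a natural bijection between: (1) descending chains ℰ_n ⊂ ⋯ ⊂ ℰ_1 ⊂ ℰ_0 = ℰ in which each ℰ_{i+1} is the elementary modification of ℰ_i along a quotient ℰ_{i,ξ} ↠ Q_i and each composite Q_i → ℰ_{i+1,ξ} → Q_{i+1} (first map induced by multiplication by π) is an isomorphism; and (2) quotients ℰ ⊗_R R/(πⁿ) → 𝒬_n that are flat over R/(πⁿ). The bijection sends a chain to ℰ/ℰ_n, and conversely a flat quotient 𝒬_n to the chain ℰ_i := preimage of π^i𝒬_n under ℰ → 𝒬_n. -/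
/-!
STATEMENT 7.
Let `R` be a DVR with uniformizer `π`, `n ≥ 0`, and `ℰ` an `R`-flat coherent sheaf on `X_R`.
There is a natural bijection between:
(1) descending chains `ℰ_n ⊆ ⋯ ⊆ ℰ_1 ⊆ ℰ_0 = ℰ` in which each `ℰ_{i+1}` is the elementary
    modification of `ℰ_i` along a quotient `ℰ_{i,ξ} ↠ Q_i` (equivalently
    `πℰ_i ⊆ ℰ_{i+1} ⊆ ℰ_i`, with `Q_i = ℰ_i/ℰ_{i+1}`), such that each composite
    `Q_i → ℰ_{i+1,ξ} → Q_{i+1}` (first map induced by multiplication by `π`) is an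
    isomorphism — elementwise: multiplication by `π` induces a bijection
    `ℰ_i/ℰ_{i+1} → ℰ_{i+1}/ℰ_{i+2}` for `0 ≤ i ≤ n-2`; and
(2) quotients `ℰ ⊗_R R/(πⁿ) ↠ 𝒬_n` flat over `R/(πⁿ)` — encoded by their kernels, i.e.
    submodules `N ⊇ πⁿℰ`, flatness of `ℰ/N` over `R/(πⁿ)` being expressed by the local
    flatness criterion (stated in the context): multiplication by `π` induces bijections
    `π^i𝒬/π^{i+1}𝒬 → π^{i+1}𝒬/π^{i+2}𝒬` for `0 ≤ i ≤ n-2`, where `π^i𝒬` corresponds to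
    `π^iℰ + N ⊆ ℰ`.
The bijection sends a chain to `ℰ/ℰ_n` (i.e. to `N = ℰ_n`) and a flat quotient `𝒬` to the
chain of preimages `ℰ_i = preimage of π^i𝒬`, i.e. `ℰ_i = π^iℰ + N`.

Encoding (affine-locally): `ℰ` is an `A`-module `M` flat over `R`, where `A` is an
`R`-algebra, and `J = (π) ⊆ A`.
-/

open Submodule

/-- Condition (1): a chain of elementary modifications with the isomorphism condition on the
successive quotients. -/
def IsModificationChain {A M : Type*} [CommRing A] [AddCommGroup M] [Module A M]
    (J : Ideal A) (π' : A) (n : ℕ) (E : Fin (n + 1) → Submodule A M) : Prop :=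
  E 0 = ⊤ ∧
  (∀ (i : ℕ) (h : i < n),
      E ⟨i + 1, by omega⟩ ≤ E ⟨i, by omega⟩ ∧ J • E ⟨i, by omega⟩ ≤ E ⟨i + 1, by omega⟩) ∧
  (∀ (i : ℕ) (h : i + 2 ≤ n),
      (∀ x ∈ E ⟨i + 1, by omega⟩, ∃ y ∈ E ⟨i, by omega⟩, x - π' • y ∈ E ⟨i + 2, by omega⟩) ∧
      (∀ y ∈ E ⟨i, by omega⟩, π' • y ∈ E ⟨i + 2, by omega⟩ → y ∈ E ⟨i + 1, by omega⟩))

/-- Condition (2): `N` is the kernel of a quotient of `M/πⁿM` which is flat over `R/(πⁿ)`,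
flatness being expressed via the local flatness criterion. -/
def IsFlatQuotientKernel {A M : Type*} [CommRing A] [AddCommGroup M] [Module A M]
    (J : Ideal A) (π' : A) (n : ℕ) (N : Submodule A M) : Prop :=
  J ^ n • (⊤ : Submodule A M) ≤ N ∧
  (∀ (i : ℕ), i + 2 ≤ n →
      (∀ x ∈ J ^ (i + 1) • (⊤ : Submodule A M) ⊔ N,
        ∃ y ∈ J ^ i • (⊤ : Submodule A M) ⊔ N, x - π' • y ∈ J ^ (i + 2) • (⊤ : Submodule A M) ⊔ N) ∧
      (∀ y ∈ J ^ i • (⊤ : Submodule A M) ⊔ N,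
        π' • y ∈ J ^ (i + 2) • (⊤ : Submodule A M) ⊔ N → y ∈ J ^ (i + 1) • (⊤ : Submodule A M) ⊔ N))

/-!
The surjectivity half of the isomorphism condition, iterated downwards from `ℰ_n`, gives
`ℰ_{i+1} ⊆ πℰ_i + ℰ_n`; together with `π^iℰ ⊆ ℰ_i` this forces `ℰ_i = π^iℰ + ℰ_n`. So a
chain is determined by its last term, and for the chain `π^iℰ + N` the isomorphism conditions
are literally the flatness criterion for `ℰ/N`.
-/

namespace IsModificationChain

variable {A M : Type*} [CommRing A] [AddCommGroup M] [Module A M]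
  {J : Ideal A} {π' : A} {n : ℕ} {E : Fin (n + 1) → Submodule A M}

theorem antitone (hE : IsModificationChain J π' n E) : Antitone E :=
  Fin.antitone_iff_succ_le.2 fun i => (hE.2.1 i i.2).1

theorem last_le (hE : IsModificationChain J π' n E) (i : Fin (n + 1)) : E (Fin.last n) ≤ E i :=
  hE.antitone (Fin.le_last i)

theorem pow_smul_top_le (hE : IsModificationChain J π' n E) (i : Fin (n + 1)) :
    J ^ (i : ℕ) • (⊤ : Submodule A M) ≤ E i := by
  induction i using Fin.induction with
  | zero => simp [hE.1]
  | succ i ih =>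
    rw [Fin.val_succ, pow_succ', mul_smul]
    exact (smul_mono_right J ih).trans (hE.2.1 i i.2).2

theorem smul_last_le (hE : IsModificationChain J π' n E) (hn : 0 < n) :
    J • E (Fin.last n) ≤ E (Fin.last n) := by
  obtain ⟨m, rfl⟩ : ∃ m, n = m + 1 := ⟨n - 1, by omega⟩
  exact (smul_mono_right J (hE.last_le ⟨m, by omega⟩)).trans (hE.2.1 m (by omega)).2

theorem le_smul_sup_last (hπ : π' ∈ J) (hE : IsModificationChain J π' n E) (i : ℕ)
    (hi : i < n) :
    E ⟨i + 1, by omega⟩ ≤ J • E ⟨i, by omega⟩ ⊔ E (Fin.last n) := by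
  induction hd : n - (i + 1) generalizing i with
  | zero =>
    obtain rfl : i + 1 = n := by omega
    exact le_sup_right
  | succ d ih =>
    intro x hx
    obtain ⟨y, hy, hxy⟩ := (hE.2.2 i (by omega)).1 x hx
    have hxy' : x - π' • y ∈ J • E ⟨i, by omega⟩ ⊔ E (Fin.last n) :=
      sup_le_sup_right (smul_mono_right J (hE.2.1 i hi).1) _ (ih (i + 1) (by omega) (by omega) hxy)
    simpa using add_mem (mem_sup_left (smul_mem_smul hπ hy)) hxy'

theorem eq_pow_smul_top_sup_last (hπ : π' ∈ J) (hE : IsModificationChain J π' n E)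
    (i : Fin (n + 1)) : E i = J ^ (i : ℕ) • (⊤ : Submodule A M) ⊔ E (Fin.last n) := by
  refine le_antisymm ?_ (sup_le (hE.pow_smul_top_le i) (hE.last_le i))
  induction i using Fin.induction with
  | zero => simp [hE.1]
  | succ i ih =>
    calc E i.succ ≤ J • E i.castSucc ⊔ E (Fin.last n) := hE.le_smul_sup_last hπ i i.2
      _ ≤ J • (J ^ (i : ℕ) • ⊤ ⊔ E (Fin.last n)) ⊔ E (Fin.last n) :=
        sup_le_sup_right (smul_mono_right J ih) _
      _ = J ^ ((i : ℕ) + 1) • ⊤ ⊔ (J • E (Fin.last n) ⊔ E (Fin.last n)) := by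
        rw [smul_sup, pow_succ', mul_smul, sup_assoc]
      _ = J ^ (i.succ : ℕ) • ⊤ ⊔ E (Fin.last n) := by
        rw [sup_eq_right.2 (hE.smul_last_le i.pos), Fin.val_succ]

theorem isFlatQuotientKernel_last (hπ : π' ∈ J) (hE : IsModificationChain J π' n E) :
    IsFlatQuotientKernel J π' n (E (Fin.last n)) := by
  refine ⟨hE.pow_smul_top_le (Fin.last n), fun i hi => ?_⟩
  have h := hE.2.2 i hi
  rwa [hE.eq_pow_smul_top_sup_last hπ ⟨i, _⟩, hE.eq_pow_smul_top_sup_last hπ ⟨i + 1, _⟩,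
    hE.eq_pow_smul_top_sup_last hπ ⟨i + 2, _⟩] at h

end IsModificationChain

namespace IsFlatQuotientKernel

variable {A M : Type*} [CommRing A] [AddCommGroup M] [Module A M]
  {J : Ideal A} {π' : A} {n : ℕ} {N : Submodule A M}

theorem isModificationChain (hN : IsFlatQuotientKernel J π' n N) :
    IsModificationChain J π' n fun i => J ^ (i : ℕ) • (⊤ : Submodule A M) ⊔ N := by
  refine ⟨by simp, fun i _ => ⟨?_, ?_⟩, hN.2⟩
  · exact sup_le_sup_right (smul_mono_left (Ideal.pow_le_pow_right i.le_succ)) N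
  · change J • (J ^ i • ⊤ ⊔ N) ≤ J ^ (i + 1) • ⊤ ⊔ N
    rw [smul_sup, pow_succ', mul_smul]
    exact sup_le_sup_left Submodule.smul_le_right _

end IsFlatQuotientKernel

def modificationChainEquivFlatQuotientKernel {A M : Type*} [CommRing A] [AddCommGroup M]
    [Module A M] {J : Ideal A} {π' : A} {n : ℕ} (hπ : π' ∈ J) :
    {E : Fin (n + 1) → Submodule A M // IsModificationChain J π' n E} ≃
      {N : Submodule A M // IsFlatQuotientKernel J π' n N} where
  toFun E := ⟨E.1 (Fin.last n), E.2.isFlatQuotientKernel_last hπ⟩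
  invFun N := ⟨fun i => J ^ (i : ℕ) • (⊤ : Submodule A M) ⊔ N.1, N.2.isModificationChain⟩
  left_inv E := Subtype.ext <| funext fun i => (E.2.eq_pow_smul_top_sup_last hπ i).symm
  right_inv N := Subtype.ext <| sup_eq_right.2 N.2.1

theorem chains_of_modifications_equiv_flat_quotients_general
    {R : Type*} [CommRing R]
    {A : Type*} [CommRing A] [Algebra R A]
    (π : R)
    {M : Type*} [AddCommGroup M] [Module A M]
    (n : ℕ) :
    ∃ e : {E : Fin (n + 1) → Submodule A M //
            IsModificationChain (Ideal.span {algebraMap R A π}) (algebraMap R A π) n E} ≃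
          {N : Submodule A M //
            IsFlatQuotientKernel (Ideal.span {algebraMap R A π}) (algebraMap R A π) n N},
      -- the chain `ℰ_•` is sent to the quotient `ℰ/ℰ_n`, i.e. to `N = ℰ_n`
      (∀ E, (e E : Submodule A M) = E.1 (Fin.last n)) ∧
      -- the flat quotient with kernel `N` is sent to the chain `ℰ_i = π^iℰ + N`
      (∀ N (i : Fin (n + 1)),
        (e.symm N : Fin (n + 1) → Submodule A M) i
          = Ideal.span {algebraMap R A π} ^ (i : ℕ) • (⊤ : Submodule A M) ⊔ (N : Submodule A M)) :=
  ⟨modificationChainEquivFlatQuotientKernel (Ideal.mem_span_singleton_self _),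
    fun _ => rfl, fun _ _ => rfl⟩

theorem chains_of_modifications_equiv_flat_quotients
    {R : Type*} [CommRing R] [IsDomain R] [IsDiscreteValuationRing R]
    {A : Type*} [CommRing A] [Algebra R A]
    (π : R) (hπ : Irreducible π)
    {M : Type*} [AddCommGroup M] [Module R M] [Module A M] [IsScalarTower R A M]
    [Module.Flat R M]
    (n : ℕ) :
    ∃ e : {E : Fin (n + 1) → Submodule A M //
            IsModificationChain (Ideal.span {algebraMap R A π}) (algebraMap R A π) n E} ≃
          {N : Submodule A M //
            IsFlatQuotientKernel (Ideal.span {algebraMap R A π}) (algebraMap R A π) n N},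
      -- the chain `ℰ_•` is sent to the quotient `ℰ/ℰ_n`, i.e. to `N = ℰ_n`
      (∀ E, (e E : Submodule A M) = E.1 (Fin.last n)) ∧
      -- the flat quotient with kernel `N` is sent to the chain `ℰ_i = π^iℰ + N`
      (∀ N (i : Fin (n + 1)),
        (e.symm N : Fin (n + 1) → Submodule A M) i
          = Ideal.span {algebraMap R A π} ^ (i : ℕ) • (⊤ : Submodule A M) ⊔ (N : Submodule A M)) :=
  chains_of_modifications_equiv_flat_quotients_general π n
end

section
/- Let ℰ' be a family of sheaves on the blowup X̂ over a base, O_C(-m) the pushforward of the degree -m line bundle on the exceptional curve C, and 𝔱 a trivial line bundle with first Chern class t. Define μ_ℰ(σ) = π_*((c₂(ℰ) − ¼c₁(ℰ)²) ∪ π_X*σ). Then: (1) μ_{ℰ'⊕O_C(-m)⊗𝔱^∨}([C]) = μ_{ℰ'}([C]) − t − ½ c₁(ℰ')/[pt]; (2) for α ∈ H²(X̂,ℚ) with α·[C] = 0, μ_{ℰ'⊕O_C(-m)⊗𝔱^∨}(α) = μ_{ℰ'}(α); (3) μ_{ℰ'⊕O_C(-m)⊗𝔱^∨}([pt]) = μ_{ℰ'}([pt]).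 -/
/-!
STATEMENT 17.
Let `ℰ'` be a family of sheaves on the blowup `X̂` over a base `U`, `O_C(-m)` the pushforward
of the degree `-m` line bundle on the exceptional curve `C`, and `𝔱` the trivial line bundle
with first Chern class `t`.  With `μ_ℰ(σ) = π_*((c₂(ℰ) − ¼c₁(ℰ)²) ∪ π_X^*σ)
            = π_*((¼c₁(ℰ)² − ch₂(ℰ)) ∪ π_X^*σ)`:
(1) `μ_{ℰ'⊕O_C(-m)⊗𝔱^∨}([C]) = μ_{ℰ'}([C]) − t − ½·c₁(ℰ')/[pt]`;
(2) for `α ∈ H²(X̂, ℚ)` with `α·[C] = 0`: `μ_{ℰ'⊕O_C(-m)⊗𝔱^∨}(α) = μ_{ℰ'}(α)`;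
(3) `μ_{ℰ'⊕O_C(-m)⊗𝔱^∨}([pt]) = μ_{ℰ'}([pt])`.

Encoding: `HU = H^*(U, ℚ)`, `HX = H^*(X̂, ℚ)`, `AA = H^*(U × X̂, ℚ)` are (graded-)
commutative `ℚ`-algebras (all classes involved have even degree); `pU`, `pX` are the
pullbacks, `π : AA → HU` is `π_{U*}` (a `ℚ`-linear map satisfying the projection formula
and `π(pX [pt]) = 1`); `C`, `pt` and `α` are classes in `HX` with `C·C = −pt`, `C·pt = 0`,
`pt·pt = 0`, `α·C = 0`, `α·pt = 0`.  The family `ℰ = ℰ' ⊕ O_C(-m) ⊗ 𝔱^∨` has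
`c₁(ℰ) = c₁(ℰ') + [C]` and `ch₂(ℰ) = ch₂(ℰ') − (m − ½)[pt] − t·[C]`
(since `ch(O_C(-m)) = [C] − (m − ½)[pt]`, cf. `ch(O_C(-1)) = [C] − ½[pt]`).
-/

theorem mu_insertions_of_direct_sum_with_OC
    {HU HX AA : Type*} [CommRing HU] [CommRing HX] [CommRing AA]
    [Algebra ℚ HU] [Algebra ℚ HX] [Algebra ℚ AA]
    (pU : HU →ₐ[ℚ] AA) (pX : HX →ₐ[ℚ] AA)    -- pullbacks along the two projections
    (π : AA →ₗ[ℚ] HU)                          -- the pushforward `π_{U*}`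
    (hproj : ∀ (a : HU) (x : AA), π (pU a * x) = a * π x)   -- projection formula
    (C pt α : HX)                               -- `[C]`, `[pt]`, and a class `α ∈ H²`
    (hCC : C * C = -pt) (hCpt : C * pt = 0) (hptpt : pt * pt = 0)
    (hαC : α * C = 0) (hαpt : α * pt = 0)
    (hint : π (pX pt) = 1)                      -- `∫_{X̂} [pt] = 1`
    (m : ℤ) (t : HU)                            -- the twist and the equivariant parameter
    (c1 ch2 : AA)                               -- `c₁(ℰ')`, `ch₂(ℰ')`
    (c1E ch2E : AA)                             -- `c₁`, `ch₂` of `ℰ' ⊕ O_C(-m) ⊗ 𝔱^∨`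
    (hc1E : c1E = c1 + pX C)
    (hch2E : ch2E = ch2 - ((m : ℚ) - 1/2) • pX pt - pU t * pX C) :
    -- (1)
    (π (((1/4 : ℚ) • (c1E * c1E) - ch2E) * pX C)
        = π (((1/4 : ℚ) • (c1 * c1) - ch2) * pX C) - t - (1/2 : ℚ) • π (c1 * pX pt)) ∧
    -- (2)
    (π (((1/4 : ℚ) • (c1E * c1E) - ch2E) * pX α)
        = π (((1/4 : ℚ) • (c1 * c1) - ch2) * pX α)) ∧
    -- (3)
    (π (((1/4 : ℚ) • (c1E * c1E) - ch2E) * pX pt)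
        = π (((1/4 : ℚ) • (c1 * c1) - ch2) * pX pt)) := by
  have hCC' : pX C * pX C = - pX pt := by rw [← map_mul, hCC, map_neg]
  have hCpt' : pX C * pX pt = 0 := by rw [← map_mul, hCpt, map_zero]
  have hptpt' : pX pt * pX pt = 0 := by rw [← map_mul, hptpt, map_zero]
  have haC' : pX α * pX C = 0 := by rw [← map_mul, hαC, map_zero]
  have hapt' : pX α * pX pt = 0 := by rw [← map_mul, hαpt, map_zero]
  have hhalf : algebraMap ℚ AA (1/2) = 2 * algebraMap ℚ AA (1/4) := by
    rw [← map_ofNat (algebraMap ℚ AA) 2, ← map_mul]; norm_num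
  subst hc1E hch2E
  simp only [Algebra.smul_def] at *
  refine ⟨?_, ?_, ?_⟩
  · have key : (algebraMap ℚ AA (1/4) * ((c1 + pX C) * (c1 + pX C)) -
        (ch2 - algebraMap ℚ AA ((m : ℚ) - 1/2) * pX pt - pU t * pX C)) * pX C
        = (algebraMap ℚ AA (1/4) * (c1 * c1) - ch2) * pX C
          + pU (-t) * pX pt
          + algebraMap ℚ AA (-(1/2)) * (c1 * pX pt) := by
      rw [map_neg pU, map_neg (algebraMap ℚ AA)]
      linear_combination (algebraMap ℚ AA (1/4) * pX C + algebraMap ℚ AA (1/2) * c1 + pU t) * hCC'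
        + (algebraMap ℚ AA ((m:ℚ) - 1/2) - algebraMap ℚ AA (1/4)) * hCpt'
        - c1 * pX C * pX C * hhalf
    rw [key, map_add, map_add, hproj, hint, mul_one,
        ← pU.commutes (-(1/2) : ℚ), hproj, map_neg]
    ring
  · have key : (algebraMap ℚ AA (1/4) * ((c1 + pX C) * (c1 + pX C)) -
        (ch2 - algebraMap ℚ AA ((m : ℚ) - 1/2) * pX pt - pU t * pX C)) * pX α
        = (algebraMap ℚ AA (1/4) * (c1 * c1) - ch2) * pX α := by
      linear_combination (algebraMap ℚ AA (1/2) * c1 + algebraMap ℚ AA (1/4) * pX C + pU t) * haC'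
        + algebraMap ℚ AA ((m:ℚ) - 1/2) * hapt' - c1 * pX C * pX α * hhalf
    rw [key]
  · have key : (algebraMap ℚ AA (1/4) * ((c1 + pX C) * (c1 + pX C)) -
        (ch2 - algebraMap ℚ AA ((m : ℚ) - 1/2) * pX pt - pU t * pX C)) * pX pt
        = (algebraMap ℚ AA (1/4) * (c1 * c1) - ch2) * pX pt := by
      linear_combination (algebraMap ℚ AA (1/2) * c1 + algebraMap ℚ AA (1/4) * pX C + pU t) * hCpt'
        + algebraMap ℚ AA ((m:ℚ) - 1/2) * hptpt' - c1 * pX C * pX pt * hhalf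
    rw [key]
end
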